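/- arXiv:1910.13133 — 3 statements merged into one kernel-verified Lean document; each statement's English description precedes it below -/
import Mathlib

section
/- Let p be a prime and D a 1-(v,k,r) design with k ≡ 0 mod p and all block intersection numbers ≡ 0 mod p. Let G be an automorphism group of D acting with all point orbits of length w and all block orbits of length w, where furthermore the integer quantities satisfy the orbit-matrix identities. Then the rows of the orbit matrix O, reduced mod p, span a self-orthogonal code over F_p of length v/w. -/
/-!
Fix a block `x` in the block orbit `B_s`. Double counting incidences between a point orbit
`V_j` and the block orbit `B_t` (both of size `w`) shows that every point of `V_j` lies on
exactly `O t j` blocks of `B_t`. Hence `∑ j, O s j * O t j` counts the pairs `(pt, x')` with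
`x' ∈ B_t` and `pt ∈ x ∩ x'`, i.e. it equals `∑ x' ∈ B_t, |x ∩ x'|`; every summand is `k` or a
block intersection number, so it vanishes mod `p`. Orthogonality of the rows extends to their
span by bilinearity.
-/

open Matrix Finset MulAction

section DoubleCounting

variable {B P : Type*} {Inc : B → P → Prop} [∀ x, DecidablePred (Inc x)]

lemma sum_card_filter_of_existsUnique_mem {ι α : Type*} [Fintype ι] [Fintype α]
    {V : ι → Finset α} (hV : ∀ a, ∃! i, a ∈ V i) (Q : α → Prop) [DecidablePred Q] :
    ∑ i, #{a ∈ V i | Q a} = #{a | Q a} := by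
  classical
  have hfiber : ∀ a, #{i | a ∈ V i} = 1 := fun a => by
    simpa [card_eq_one_iff_existsUnique] using hV a
  calc ∑ i, #{a ∈ V i | Q a} = ∑ i, #{a ∈ ({a | Q a} : Finset α) | a ∈ V i} := by
        refine sum_congr rfl fun i _ => congrArg card ?_
        ext a; simp [and_comm]
    _ = ∑ a ∈ ({a | Q a} : Finset α), #{i | a ∈ V i} :=
        (sum_card_bipartiteAbove_eq_sum_card_bipartiteBelow _).symm
    _ = #{a | Q a} := by simp [hfiber]

lemma sum_card_filter_inc_and_inc (x : B) {T : Finset B} {V : Finset P} {c : ℕ}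
    (hc : ∀ q ∈ V, #{x' ∈ T | Inc x' q} = c) :
    ∑ x' ∈ T, #{q ∈ V | Inc x q ∧ Inc x' q} = #{q ∈ V | Inc x q} * c := by
  calc ∑ x' ∈ T, #{q ∈ V | Inc x q ∧ Inc x' q}
        = ∑ x' ∈ T, #{q ∈ ({q ∈ V | Inc x q} : Finset P) | Inc x' q} := by
          simp only [filter_filter]
    _ = ∑ q ∈ ({q ∈ V | Inc x q} : Finset P), #{x' ∈ T | Inc x' q} :=
        (sum_card_bipartiteAbove_eq_sum_card_bipartiteBelow _).symm
    _ = #{q ∈ V | Inc x q} * c := by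
        rw [sum_congr rfl fun q hq => hc q (mem_filter.1 hq).1, sum_const, smul_eq_mul]

lemma sum_mul_eq_sum_card_filter_inc_and_inc {ι : Type*} [Fintype ι] [Fintype P]
    {V : ι → Finset P} (hV : ∀ q, ∃! j, q ∈ V j) (x : B) (T : Finset B) {a b : ι → ℕ}
    (ha : ∀ j, #{q ∈ V j | Inc x q} = a j) (hb : ∀ j, ∀ q ∈ V j, #{x' ∈ T | Inc x' q} = b j) :
    ∑ j, a j * b j = ∑ x' ∈ T, #{q | Inc x q ∧ Inc x' q} := by
  simp_rw [← sum_card_filter_of_existsUnique_mem hV]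
  rw [sum_comm]
  exact sum_congr rfl fun j _ => by rw [sum_card_filter_inc_and_inc x (hb j), ha j]

end DoubleCounting

section OrbitCounting

variable {G P B : Type*} [Group G] [MulAction G P] [MulAction G B]
  {Inc : B → P → Prop} [∀ x, DecidablePred (Inc x)]

lemma card_filter_inc_smul (hInc : ∀ (g : G) x pt, Inc x pt ↔ Inc (g • x) (g • pt))
    {T : Finset B} (hT : ∀ g : G, ∀ x ∈ T, g • x ∈ T) (g : G) (q : P) :
    #{x ∈ T | Inc x (g • q)} = #{x ∈ T | Inc x q} := by
  refine card_nbij' (g⁻¹ • ·) (g • ·) ?_ ?_ (fun x _ => smul_inv_smul g x)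
    (fun x _ => inv_smul_smul g x)
  · intro x hx
    rw [mem_coe, mem_filter] at hx ⊢
    exact ⟨hT _ _ hx.1, by simpa using (hInc g⁻¹ x (g • q)).1 hx.2⟩
  · intro x hx
    rw [mem_coe, mem_filter] at hx ⊢
    exact ⟨hT _ _ hx.1, (hInc g x q).1 hx.2⟩

/-- The count is constant along the orbit `V` by `card_filter_inc_smul`, so double counting
incidences between `V` and `T` identifies it. -/
lemma card_filter_inc_eq_of_coe_eq_orbit (hInc : ∀ (g : G) x pt, Inc x pt ↔ Inc (g • x) (g • pt))
    {T : Finset B} (hT : ∀ g : G, ∀ x ∈ T, g • x ∈ T) {V : Finset P} {a : P}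
    (hV : (V : Set P) = orbit G a) (hVT : #V = #T) {c : ℕ}
    (hc : ∀ x ∈ T, #{q ∈ V | Inc x q} = c) {q : P} (hq : q ∈ V) :
    #{x ∈ T | Inc x q} = c := by
  have hconst : ∀ q ∈ V, #{x ∈ T | Inc x q} = #{x ∈ T | Inc x a} := by
    intro q hq
    rw [← mem_coe, hV] at hq
    obtain ⟨g, rfl⟩ := hq
    exact card_filter_inc_smul hInc hT g a
  have hdouble : #V * #{x ∈ T | Inc x a} = #V * c :=
    calc #V * #{x ∈ T | Inc x a} = ∑ q ∈ V, #{x ∈ T | Inc x q} := by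
          rw [sum_congr rfl hconst, sum_const, smul_eq_mul]
      _ = ∑ x ∈ T, #{q ∈ V | Inc x q} :=
          sum_card_bipartiteAbove_eq_sum_card_bipartiteBelow _
      _ = #V * c := by rw [sum_congr rfl hc, sum_const, smul_eq_mul, hVT]
  rw [hconst q hq]
  exact Nat.eq_of_mul_eq_mul_left (card_pos.2 ⟨q, hq⟩) hdouble

end OrbitCounting

lemma dotProduct_eq_zero_of_mem_span {R ι n : Type*} [CommSemiring R] [Fintype n]
    {v : ι → n → R} (hv : ∀ i j, v i ⬝ᵥ v j = 0) {u w : n → R}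
    (hu : u ∈ Submodule.span R (Set.range v)) (hw : w ∈ Submodule.span R (Set.range v)) :
    u ⬝ᵥ w = 0 := by
  induction hu, hw using Submodule.span_induction₂ with
  | mem_mem u w hu hw =>
    obtain ⟨i, rfl⟩ := hu
    obtain ⟨j, rfl⟩ := hw
    exact hv i j
  | zero_left => exact zero_dotProduct _
  | zero_right => exact dotProduct_zero _
  | add_left => simp_all [add_dotProduct]
  | add_right => simp_all [dotProduct_add]
  | smul_left => simp_all [smul_dotProduct]
  | smul_right => simp_all [dotProduct_smul]

theorem stmt7_general {P B G : Type*} [Fintype P] [Group G]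
    [MulAction G P] [MulAction G B]
    (Inc : B → P → Prop) [∀ x, DecidablePred (Inc x)]
    (hGInc : ∀ (g : G) (x : B) (pt : P), Inc x pt ↔ Inc (g • x) (g • pt))
    (p : ℕ) (k : ℕ)
    (hk : ∀ x : B, (Finset.univ.filter (fun pt => Inc x pt)).card = k)
    (hkp : p ∣ k)
    (hint : ∀ x x' : B, x ≠ x' →
      p ∣ (Finset.univ.filter (fun pt => Inc x pt ∧ Inc x' pt)).card)
    (n m w : ℕ) (Vo : Fin n → Finset P) (Bo : Fin m → Finset B)
    (hVo : ∀ j, ∃ pt, (Vo j : Set P) = MulAction.orbit G pt)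
    (hVpart : ∀ pt : P, ∃! j, pt ∈ Vo j)
    (hVw : ∀ j, (Vo j).card = w)
    (hBo : ∀ i, ∃ x, (Bo i : Set B) = MulAction.orbit G x)
    (hBw : ∀ i, (Bo i).card = w)
    (O : Matrix (Fin m) (Fin n) ℕ)
    (hO : ∀ i j, ∀ x ∈ Bo i, O i j = ((Vo j).filter (fun pt => Inc x pt)).card)
    (A : Fin m → Fin n → ZMod p)
    (hA : A = fun i j => ((O i j : ℕ) : ZMod p)) :
    ∀ u ∈ Submodule.span (ZMod p) (Set.range A),
      ∀ x ∈ Submodule.span (ZMod p) (Set.range A), u ⬝ᵥ x = 0 := by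
  subst hA
  refine fun u hu x hx => dotProduct_eq_zero_of_mem_span (fun s t => ?_) hu hx
  obtain ⟨y, hy⟩ := hBo s
  have hys : y ∈ Bo s := by rw [← mem_coe, hy]; exact mem_orbit_self y
  have hstable : ∀ g : G, ∀ x ∈ Bo t, g • x ∈ Bo t := fun g x hx => by
    obtain ⟨z, hz⟩ := hBo t
    rw [← mem_coe, hz] at hx ⊢
    exact mem_orbit_of_mem_orbit g hx
  have hcount : ∀ j, ∀ q ∈ Vo j, #{x' ∈ Bo t | Inc x' q} = O t j := fun j q hq => by
    obtain ⟨a, ha⟩ := hVo j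
    exact card_filter_inc_eq_of_coe_eq_orbit hGInc hstable ha (by rw [hVw, hBw])
      (fun x hx => (hO t j x hx).symm) hq
  have hdiv : p ∣ ∑ j, O s j * O t j := by
    rw [sum_mul_eq_sum_card_filter_inc_and_inc hVpart y (Bo t) (fun j => (hO s j y hys).symm)
      hcount]
    refine dvd_sum fun x' _ => ?_
    obtain rfl | hne := eq_or_ne y x'
    · simpa only [and_self, hk] using hkp
    · exact hint y x' hne
  simpa [dotProduct] using (ZMod.natCast_eq_zero_iff _ p).2 hdiv

/-- For a 1-(v,k,r) design with p ∣ k and all block intersection numbers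
divisible by p, and an automorphism group with all point orbits and all block orbits
of length w, the rows of the orbit matrix reduced mod p span a self-orthogonal code
over F_p of length v/w. -/
theorem stmt7 {P B G : Type*} [Fintype P] [Fintype B] [Group G]
    [MulAction G P] [MulAction G B]
    (Inc : B → P → Prop) [∀ x, DecidablePred (Inc x)]
    (hGInc : ∀ (g : G) (x : B) (pt : P), Inc x pt ↔ Inc (g • x) (g • pt))
    (p : ℕ) (hp : p.Prime) (k r : ℕ)
    (hk : ∀ x : B, (Finset.univ.filter (fun pt => Inc x pt)).card = k)
    (hr : ∀ pt : P, (Finset.univ.filter (fun x => Inc x pt)).card = r)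
    (hkp : p ∣ k)
    (hint : ∀ x x' : B, x ≠ x' →
      p ∣ (Finset.univ.filter (fun pt => Inc x pt ∧ Inc x' pt)).card)
    (n m w : ℕ) (Vo : Fin n → Finset P) (Bo : Fin m → Finset B)
    (hVo : ∀ j, ∃ pt, (Vo j : Set P) = MulAction.orbit G pt)
    (hVpart : ∀ pt : P, ∃! j, pt ∈ Vo j)
    (hVw : ∀ j, (Vo j).card = w)
    (hBo : ∀ i, ∃ x, (Bo i : Set B) = MulAction.orbit G x)
    (hBpart : ∀ x : B, ∃! i, x ∈ Bo i)
    (hBw : ∀ i, (Bo i).card = w)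
    (hnw : n * w = Fintype.card P)
    (O : Matrix (Fin m) (Fin n) ℕ)
    (hO : ∀ i j, ∀ x ∈ Bo i, O i j = ((Vo j).filter (fun pt => Inc x pt)).card)
    (A : Fin m → Fin n → ZMod p)
    (hA : A = fun i j => ((O i j : ℕ) : ZMod p)) :
    ∀ u ∈ Submodule.span (ZMod p) (Set.range A),
      ∀ x ∈ Submodule.span (ZMod p) (Set.range A), u ⬝ᵥ x = 0 :=
  stmt7_general Inc hGInc p k hk hkp hint n m w Vo Bo hVo hVpart hVw hBo hBw O hO A hA
end

section
/- Let p be a prime, and O an m×n integer matrix such that for all s ≠ t, O[s]·O[t] ≡ w·d mod p, and for all s, O[s]·O[s] ≡ (w−1)·d mod p, where w, d are integers with p | w. Let F be a field of characteristic p containing a square root s₀ of d (image of d in F). Then the rows of the matrix A = [s₀·I_m | O] over F span a self-orthogonal code of length m+n and dimension m (provided d ≠ 0 in F); if m = n the code is self-dual. -/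
/-! Over `F` the rows of `A` are those of `G = [s₀ I | Ō]`, where `Ō` is `O` reduced mod `p`.
The hypotheses say `Ō Ōᵀ = (w - 1) d I + w d (J - I)`, which is `-d I` since `p ∣ w`, hence
`G Gᵀ = s₀² I - d I = 0`. The invertible block `s₀ I` makes the rows independent, and for `m = n`
a totally isotropic subspace of half the dimension is its own orthogonal for the nondegenerate
dot product. -/

open Matrix

section DotProduct

variable {K ι : Type*} [Field K] [Fintype ι]

theorem dotProductBilin_nondegenerate [DecidableEq ι] :
    LinearMap.BilinForm.Nondegenerate (dotProductBilin K K : LinearMap.BilinForm K (ι → K)) := by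
  rw [LinearMap.BilinForm.nondegenerate_iff_ker_eq_bot, LinearMap.ker_eq_bot']
  intro x hx
  ext i
  simpa using LinearMap.congr_fun hx (Pi.single i 1)

theorem mem_iff_forall_dotProduct_eq_zero_of_two_mul_finrank_eq {W : Submodule K (ι → K)}
    (hW : ∀ x ∈ W, ∀ y ∈ W, x ⬝ᵥ y = 0) (hdim : 2 * Module.finrank K W = Fintype.card ι)
    (z : ι → K) : z ∈ W ↔ ∀ y ∈ W, z ⬝ᵥ y = 0 := by
  classical
  let B : LinearMap.BilinForm K (ι → K) := dotProductBilin K K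
  have hle : W ≤ B.orthogonal W := fun x hx => B.mem_orthogonal_iff.mpr fun y hy => hW y hy x hx
  have heq : W = B.orthogonal W := by
    refine Submodule.eq_of_le_of_finrank_le hle ?_
    rw [B.finrank_orthogonal dotProductBilin_nondegenerate, Module.finrank_fintype_fun_eq_card]
    omega
  refine ⟨fun hz y hy => hW z hz y hy, fun h => heq ▸ ?_⟩
  exact B.mem_orthogonal_iff.mpr fun y hy => by simpa [B, dotProduct_comm] using h y hy

end DotProduct

theorem dotProduct_eq_zero_of_mem_span_row {R m n : Type*} [CommSemiring R] [Fintype m] [Fintype n]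
    {A : Matrix m n R} (hA : A * Aᵀ = 0) {x y : n → R}
    (hx : x ∈ Submodule.span R (Set.range A.row)) (hy : y ∈ Submodule.span R (Set.range A.row)) :
    x ⬝ᵥ y = 0 := by
  induction hx, hy using Submodule.span_induction₂ with
  | mem_mem x y hx hy =>
    obtain ⟨i, rfl⟩ := hx
    obtain ⟨j, rfl⟩ := hy
    simpa [mul_apply, dotProduct] using congr_fun₂ hA i j
  | zero_left => simp
  | zero_right => simp
  | add_left x y z _ _ _ hx hy => rw [add_dotProduct, hx, hy, add_zero]
  | add_right x y z _ _ _ hy hz => rw [dotProduct_add, hy, hz, add_zero]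
  | smul_left r x y _ _ h => rw [smul_dotProduct, h, smul_zero]
  | smul_right r x y _ _ h => rw [dotProduct_smul, h, smul_zero]

section BlockMatrix

variable {R m n : Type*} [Fintype m] [DecidableEq m]

theorem fromCols_smul_one_mul_transpose [CommRing R] [Fintype n] (c : R) (B : Matrix m n R) :
    fromCols (c • 1 : Matrix m m R) B * (fromCols (c • 1 : Matrix m m R) B)ᵀ =
      c ^ 2 • 1 + B * Bᵀ := by
  rw [transpose_fromCols, fromCols_mul_fromRows, transpose_smul, transpose_one, smul_mul_smul_comm,
    one_mul, sq]

theorem linearIndependent_row_fromCols_of_isUnit {K : Type*} [Field K] {A₁ : Matrix m m K}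
    (h : IsUnit A₁) (A₂ : Matrix m n K) : LinearIndependent K (fromCols A₁ A₂).row :=
  LinearIndependent.of_comp (LinearMap.funLeft K K Sum.inl) (linearIndependent_rows_of_isUnit h)

end BlockMatrix

theorem map_intCast_mul_transpose_eq_neg_smul_one {F m n : Type*} [Field F] [Fintype n]
    [DecidableEq m] (p : ℕ) [CharP F p] {w d : ℤ} {O : Matrix m n ℤ}
    (hst : ∀ s t, s ≠ t → O s ⬝ᵥ O t ≡ w * d [ZMOD p])
    (hss : ∀ s, O s ⬝ᵥ O s ≡ (w - 1) * d [ZMOD p]) (hpw : (p : ℤ) ∣ w) :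
    O.map (Int.castRingHom F) * (O.map (Int.castRingHom F))ᵀ = -(d : F) • 1 := by
  have hw : (w : F) = 0 := (CharP.intCast_eq_zero_iff F p w).mpr hpw
  ext s t
  rw [mul_apply', Matrix.smul_apply, one_apply, smul_eq_mul]
  change Int.castRingHom F ∘ O s ⬝ᵥ Int.castRingHom F ∘ O t = _
  rw [← RingHom.map_dotProduct, eq_intCast]
  split_ifs with hst'
  · subst hst'
    simp [(CharP.intCast_eq_intCast F p).mpr (hss s), hw]
  · simp [(CharP.intCast_eq_intCast F p).mpr (hst s t hst'), hw]

theorem stmt10_general {F : Type*} [Field F] (p : ℕ) [CharP F p]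
    (m n : ℕ) (w d : ℤ) (O : Matrix (Fin m) (Fin n) ℤ)
    (hst : ∀ s t : Fin m, s ≠ t → O s ⬝ᵥ O t ≡ w * d [ZMOD p])
    (hss : ∀ s : Fin m, O s ⬝ᵥ O s ≡ (w - 1) * d [ZMOD p])
    (hpw : (p : ℤ) ∣ w)
    (s₀ : F) (hs₀ : s₀ ^ 2 = (d : F)) (hd0 : (d : F) ≠ 0)
    (A : Fin m → (Fin m ⊕ Fin n) → F)
    (hA : A = fun i => Sum.elim (fun i' => if i = i' then s₀ else 0)
      (fun j => ((O i j : ℤ) : F))) :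
    (∀ x ∈ Submodule.span F (Set.range A),
      ∀ y ∈ Submodule.span F (Set.range A), x ⬝ᵥ y = 0) ∧
    Module.finrank F (Submodule.span F (Set.range A)) = m ∧
    (m = n → ∀ z : (Fin m ⊕ Fin n) → F,
      z ∈ Submodule.span F (Set.range A) ↔
        ∀ y ∈ Submodule.span F (Set.range A), z ⬝ᵥ y = 0) := by
  set B : Matrix (Fin m) (Fin n) F := O.map (Int.castRingHom F)
  set G : Matrix (Fin m) (Fin m ⊕ Fin n) F := fromCols (s₀ • 1 : Matrix (Fin m) (Fin m) F) B
  have hAG : A = G.row := by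
    subst hA
    ext i (j | j) <;> simp [G, B, one_apply]
  have hgram : G * Gᵀ = 0 := by
    rw [fromCols_smul_one_mul_transpose, hs₀,
      map_intCast_mul_transpose_eq_neg_smul_one p hst hss hpw, neg_smul, add_neg_cancel]
  have hs₀0 : s₀ ≠ 0 := by
    rintro rfl
    simp [← hs₀] at hd0
  have hunit : IsUnit (s₀ • 1 : Matrix (Fin m) (Fin m) F) := by
    rw [isUnit_iff_isUnit_det, det_smul, det_one, mul_one]
    exact hs₀0.isUnit.pow _
  have hrank : Module.finrank F (Submodule.span F (Set.range G.row)) = m := by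
    rw [finrank_span_eq_card (linearIndependent_row_fromCols_of_isUnit hunit B), Fintype.card_fin]
  have hiso : ∀ x ∈ Submodule.span F (Set.range G.row),
      ∀ y ∈ Submodule.span F (Set.range G.row), x ⬝ᵥ y = 0 :=
    fun x hx y hy => dotProduct_eq_zero_of_mem_span_row hgram hx hy
  rw [hAG]
  refine ⟨hiso, hrank, fun hmn => mem_iff_forall_dotProduct_eq_zero_of_two_mul_finrank_eq hiso ?_⟩
  simp [hrank, hmn, two_mul]

/-- If an integer matrix O satisfies O[s]·O[t] ≡ w·d mod p for s ≠ t and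
O[s]·O[s] ≡ (w−1)·d mod p, with p prime, p ∣ w, and F of characteristic p contains
s₀ with s₀² = d and d ≠ 0 in F, then the rows of A = [s₀·I_m | O] span a
self-orthogonal code of length m+n and dimension m; if m = n it is self-dual. -/
theorem stmt10 {F : Type*} [Field F] (p : ℕ) (hp : p.Prime) [CharP F p]
    (m n : ℕ) (w d : ℤ) (O : Matrix (Fin m) (Fin n) ℤ)
    (hst : ∀ s t : Fin m, s ≠ t → O s ⬝ᵥ O t ≡ w * d [ZMOD p])
    (hss : ∀ s : Fin m, O s ⬝ᵥ O s ≡ (w - 1) * d [ZMOD p])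
    (hpw : (p : ℤ) ∣ w)
    (s₀ : F) (hs₀ : s₀ ^ 2 = (d : F)) (hd0 : (d : F) ≠ 0)
    (A : Fin m → (Fin m ⊕ Fin n) → F)
    (hA : A = fun i => Sum.elim (fun i' => if i = i' then s₀ else 0)
      (fun j => ((O i j : ℤ) : F))) :
    (∀ x ∈ Submodule.span F (Set.range A),
      ∀ y ∈ Submodule.span F (Set.range A), x ⬝ᵥ y = 0) ∧
    Module.finrank F (Submodule.span F (Set.range A)) = m ∧
    (m = n → ∀ z : (Fin m ⊕ Fin n) → F,
      z ∈ Submodule.span F (Set.range A) ↔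
        ∀ y ∈ Submodule.span F (Set.range A), z ⬝ᵥ y = 0) :=
  stmt10_general p m n w d O hst hss hpw s₀ hs₀ hd0 A hA
end

section
/- Let D be a weakly self-orthogonal 1-design with block size k odd and all block intersection numbers even. Let G be an automorphism group acting with n point orbits of length w = 2^u·w' and m block orbits of lengths b_i = 2^o·b_i', with w', b_i' odd and o = u. Then the rows of the binary matrix [I_m | O], where O is the orbit matrix reduced mod 2, span a binary self-orthogonal code of length m + v/w and dimension m; if m = n the code is self-dual. -/
/-!
Fix a block `x` in the orbit `Bo s`. Counting incident pairs through the point orbits gives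
`w · Σ_{x' ∈ Bo t} |x ∩ x'| = b_t · (O O^T)_{st}`. Since `w` and `b_t` carry the same power
of 2 with odd cofactors, `(O O^T)_{st}` has the parity of `Σ_{x' ∈ Bo t} |x ∩ x'|`, which is
`k` (odd) plus even intersection numbers when `s = t`, and only even numbers otherwise. Hence
the rows of `[I | O]` are pairwise orthogonal mod 2 (the identity block contributes `δ_{st}`);
they are independent because of the identity block, and when `m = n` the code has half the
length as dimension, so it equals its dual.
-/

open Matrix Finset

section Code

variable {R ι κ : Type*}

theorem dotProduct_eq_zero_of_mem_span_s12 [CommSemiring R] [Fintype ι] {v : κ → ι → R}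
    (hv : ∀ s t, v s ⬝ᵥ v t = 0) {x y : ι → R} (hx : x ∈ Submodule.span R (Set.range v))
    (hy : y ∈ Submodule.span R (Set.range v)) : x ⬝ᵥ y = 0 := by
  have hgen : ∀ s, v s ⬝ᵥ y = 0 := fun s =>
    Submodule.span_le (p := LinearMap.ker (dotProductBilin R R (v s)))
      |>.mpr (by rintro _ ⟨t, rfl⟩; exact hv s t) hy
  exact Submodule.span_le (p := LinearMap.ker ((dotProductBilin R R).flip y))
    |>.mpr (by rintro _ ⟨s, rfl⟩; exact hgen s) hx

theorem linearIndependent_sumElim_single [Semiring R] [DecidableEq κ] (M : κ → ι → R) :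
    LinearIndependent R fun i => Sum.elim (Pi.single i 1) (M i) :=
  LinearIndependent.of_comp (LinearMap.funLeft R R Sum.inl)
    (Pi.linearIndependent_single_one κ R)

theorem mem_iff_forall_dotProduct_eq_zero_of_finrank_add_self [Field R] [Fintype ι]
    {W : Submodule R (ι → R)} (hW : ∀ x ∈ W, ∀ y ∈ W, x ⬝ᵥ y = 0)
    (hdim : Module.finrank R W + Module.finrank R W = Fintype.card ι) (z : ι → R) :
    z ∈ W ↔ ∀ y ∈ W, z ⬝ᵥ y = 0 := by
  classical
  let Bf := Matrix.toBilin' (1 : Matrix ι ι R)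
  have hBf : ∀ x y, Bf x y = x ⬝ᵥ y := fun x y => by
    rw [Matrix.toBilin'_apply', one_mulVec]
  have hle : W ≤ Bf.orthogonal W := fun x hx =>
    LinearMap.BilinForm.mem_orthogonal_iff.mpr fun y hy => (hBf y x).trans (hW y hy x hx)
  have hnd : Bf.Nondegenerate :=
    LinearMap.BilinForm.nondegenerate_toBilin'_of_det_ne_zero' _ (by simp)
  have hself : W = Bf.orthogonal W := by
    refine Submodule.eq_of_le_of_finrank_le hle ?_
    rw [LinearMap.BilinForm.finrank_orthogonal hnd, Module.finrank_fintype_fun_eq_card]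
    omega
  rw [hself, LinearMap.BilinForm.mem_orthogonal_iff, ← hself]
  refine forall₂_congr fun y _ => ?_
  rw [hBf, dotProduct_comm]

end Code

section Parity

theorem natCast_eq_of_two_pow_mul_eq {u a b S T : ℕ} (ha : Odd a) (hb : Odd b)
    (h : 2 ^ u * a * S = 2 ^ u * b * T) : (S : ZMod 2) = T := by
  rw [mul_assoc, mul_assoc] at h
  have h' := congrArg (Nat.cast : ℕ → ZMod 2) (Nat.eq_of_mul_eq_mul_left (by positivity) h)
  push_cast at h'
  rwa [ha.natCast_zmod_two, hb.natCast_zmod_two, one_mul, one_mul] at h'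

variable {P B : Type*} [Fintype P] (Inc : B → P → Prop) [∀ x, DecidablePred (Inc x)]

theorem natCast_sum_card_inter_eq_ite [DecidableEq B] {x : B}
    (hx : Odd #(univ.filter fun p => Inc x p))
    (hint : ∀ x', x ≠ x' → Even #(univ.filter fun p => Inc x p ∧ Inc x' p)) (T : Finset B) :
    ((∑ x' ∈ T, #(univ.filter fun p => Inc x p ∧ Inc x' p) : ℕ) : ZMod 2) =
      if x ∈ T then 1 else 0 := by
  have hterm : ∀ x', (#(univ.filter fun p => Inc x p ∧ Inc x' p) : ZMod 2) =
      if x = x' then 1 else 0 := by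
    intro x'
    split_ifs with h
    · subst h
      simpa only [and_self] using hx.natCast_zmod_two
    · exact (hint x' h).natCast_zmod_two
  push_cast
  simp_rw [hterm]
  exact sum_ite_eq T x _

end Parity

theorem Finset.sum_eq_sum_sum_of_existsUnique {α ι M : Type*} [Fintype α] [Fintype ι]
    [AddCommMonoid M] (V : ι → Finset α) (hV : ∀ a, ∃! i, a ∈ V i) (f : α → M) :
    ∑ a, f a = ∑ i, ∑ a ∈ V i, f a := by
  classical
  calc ∑ a, f a = ∑ a, ∑ i, if a ∈ V i then f a else 0 := by
        refine sum_congr rfl fun a _ => ?_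
        obtain ⟨i, hi, huniq⟩ := hV a
        rw [sum_eq_single i (fun j _ hj => if_neg (mt (huniq j) hj)) (by simp), if_pos hi]
    _ = ∑ i, ∑ a ∈ V i, f a := by
        rw [sum_comm]
        simp only [sum_ite_mem, univ_inter]

section Orbits

variable {P B G : Type*} [Group G] [MulAction G P] [MulAction G B]

theorem Finset.smul_mem_of_coe_eq_orbit {S : Finset B} {x₀ : B}
    (hS : (S : Set B) = MulAction.orbit G x₀) (g : G) {x : B} (hx : x ∈ S) : g • x ∈ S := by
  rw [← mem_coe, hS] at hx ⊢
  exact MulAction.mem_orbit_of_mem_orbit g hx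

variable (Inc : B → P → Prop) [∀ x, DecidablePred (Inc x)]

theorem card_filter_inc_eq_of_mem_orbit
    (hGInc : ∀ (g : G) (x : B) (p : P), Inc x p ↔ Inc (g • x) (g • p))
    {S : Finset B} (hS : ∀ g : G, ∀ x ∈ S, g • x ∈ S)
    {p p' : P} (h : p' ∈ MulAction.orbit G p) :
    #(S.filter fun x => Inc x p') = #(S.filter fun x => Inc x p) := by
  obtain ⟨g, rfl⟩ := h
  refine card_nbij' (g⁻¹ • ·) (g • ·) ?_ ?_ ?_ ?_
  · intro x hx
    simp only [coe_filter, Set.mem_ofPred_eq] at hx ⊢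
    refine ⟨hS _ x hx.1, ?_⟩
    simpa using (hGInc g⁻¹ x (g • p)).mp hx.2
  · intro x hx
    simp only [coe_filter, Set.mem_ofPred_eq] at hx ⊢
    exact ⟨hS g x hx.1, (hGInc g x p).mp hx.2⟩
  · intro x _
    simp
  · intro x _
    simp

theorem card_mul_card_filter_inc_eq
    (hGInc : ∀ (g : G) (x : B) (p : P), Inc x p ↔ Inc (g • x) (g • p))
    {S : Finset B} (hS : ∀ g : G, ∀ x ∈ S, g • x ∈ S)
    {V : Finset P} {q : P} (hV : (V : Set P) = MulAction.orbit G q) {c : ℕ}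
    (hc : ∀ x ∈ S, #(V.filter fun p => Inc x p) = c) {p : P} (hp : p ∈ V) :
    #V * #(S.filter fun x => Inc x p) = #S * c := by
  have horbit : MulAction.orbit G p = MulAction.orbit G q := by
    rw [MulAction.orbit_eq_iff, ← hV]
    exact hp
  calc #V * #(S.filter fun x => Inc x p) = ∑ p' ∈ V, #(S.filter fun x => Inc x p') := by
        refine (sum_const_nat fun p' hp' => ?_).symm
        refine card_filter_inc_eq_of_mem_orbit Inc hGInc hS ?_
        rw [horbit, ← hV]
        exact hp'
    _ = ∑ x ∈ S, #(V.filter fun p' => Inc x p') := by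
        simp only [card_filter]
        exact sum_comm
    _ = #S * c := sum_const_nat hc

theorem card_mul_sum_card_inter_eq [Fintype P]
    (hGInc : ∀ (g : G) (x : B) (p : P), Inc x p ↔ Inc (g • x) (g • p))
    {ι : Type*} [Fintype ι] {V : ι → Finset P}
    (hVo : ∀ j, ∃ q, (V j : Set P) = MulAction.orbit G q) (hVpart : ∀ p, ∃! j, p ∈ V j)
    {w : ℕ} (hVw : ∀ j, #(V j) = w) {S : Finset B} (hS : ∀ g : G, ∀ x ∈ S, g • x ∈ S)
    {c : ι → ℕ} (hc : ∀ j, ∀ x ∈ S, #((V j).filter fun p => Inc x p) = c j) (x : B) :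
    w * ∑ x' ∈ S, #(univ.filter fun p => Inc x p ∧ Inc x' p) =
      #S * ∑ j, #((V j).filter fun p => Inc x p) * c j := by
  set N : P → ℕ := fun p => #(S.filter fun x' => Inc x' p)
  have hN : ∀ j, ∀ p ∈ V j, w * N p = #S * c j := fun j p hp => by
    obtain ⟨q, hq⟩ := hVo j
    rw [← hVw j]
    exact card_mul_card_filter_inc_eq Inc hGInc hS hq (hc j) hp
  calc w * ∑ x' ∈ S, #(univ.filter fun p => Inc x p ∧ Inc x' p)
      = w * ∑ p, if Inc x p then N p else 0 := by
        simp only [N, card_filter]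
        rw [sum_comm]
        congr 1
        refine sum_congr rfl fun p _ => ?_
        split_ifs with h <;> simp [h]
    _ = ∑ j, ∑ p ∈ (V j).filter (fun p => Inc x p), w * N p := by
        rw [sum_eq_sum_sum_of_existsUnique V hVpart, mul_sum]
        simp only [sum_filter, mul_sum, mul_ite, mul_zero]
    _ = ∑ j, #((V j).filter fun p => Inc x p) * (#S * c j) :=
        sum_congr rfl fun j _ => sum_const_nat fun p hp => hN j p (mem_filter.mp hp).1
    _ = #S * ∑ j, #((V j).filter fun p => Inc x p) * c j := by
        rw [mul_sum]
        exact sum_congr rfl fun j _ => by ring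

end Orbits

theorem stmt12_general {P B G : Type*} [Fintype P] [Fintype B] [Group G]
    [MulAction G P] [MulAction G B]
    (Inc : B → P → Prop) [∀ x, DecidablePred (Inc x)]
    (hGInc : ∀ (g : G) (x : B) (pt : P), Inc x pt ↔ Inc (g • x) (g • pt))
    (k : ℕ)
    (hk : ∀ x : B, (Finset.univ.filter (fun pt => Inc x pt)).card = k)
    (hkodd : Odd k)
    (hint : ∀ x x' : B, x ≠ x' →
      Even (Finset.univ.filter (fun pt => Inc x pt ∧ Inc x' pt)).card)
    (n m w : ℕ) (Vo : Fin n → Finset P) (Bo : Fin m → Finset B) (bL : Fin m → ℕ)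
    (hVo : ∀ j, ∃ pt, (Vo j : Set P) = MulAction.orbit G pt)
    (hVpart : ∀ pt : P, ∃! j, pt ∈ Vo j)
    (hVw : ∀ j, (Vo j).card = w)
    (hBo : ∀ i, ∃ x, (Bo i : Set B) = MulAction.orbit G x)
    (hBpart : ∀ x : B, ∃! i, x ∈ Bo i)
    (hBL : ∀ i, (Bo i).card = bL i)
    (u o w' : ℕ) (b' : Fin m → ℕ)
    (hw : w = 2 ^ u * w') (hw' : Odd w')
    (hb : ∀ i, bL i = 2 ^ o * b' i) (hb' : ∀ i, Odd (b' i))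
    (hou : o = u)
    (O : Matrix (Fin m) (Fin n) ℕ)
    (hO : ∀ i j, ∀ x ∈ Bo i, O i j = ((Vo j).filter (fun pt => Inc x pt)).card)
    (A : Fin m → (Fin m ⊕ Fin n) → ZMod 2)
    (hA : A = fun i => Sum.elim (fun i' => if i = i' then 1 else 0)
      (fun j => ((O i j : ℕ) : ZMod 2))) :
    (∀ x ∈ Submodule.span (ZMod 2) (Set.range A),
      ∀ y ∈ Submodule.span (ZMod 2) (Set.range A), x ⬝ᵥ y = 0) ∧
    Module.finrank (ZMod 2) (Submodule.span (ZMod 2) (Set.range A)) = m ∧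
    (m = n → ∀ z : (Fin m ⊕ Fin n) → ZMod 2,
      z ∈ Submodule.span (ZMod 2) (Set.range A) ↔
        ∀ y ∈ Submodule.span (ZMod 2) (Set.range A), z ⬝ᵥ y = 0) := by
  classical
  have hA' : A = fun i => Sum.elim (Pi.single i 1) fun j => (O i j : ZMod 2) := by
    rw [hA]
    ext i (i' | j) <;> simp [Pi.single_apply, eq_comm]
  have horth : ∀ s t, A s ⬝ᵥ A t = 0 := by
    intro s t
    obtain ⟨x, hxs⟩ : ∃ x, x ∈ Bo s := by
      obtain ⟨x, hx⟩ := hBo s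
      exact ⟨x, by rw [← mem_coe, hx]; exact MulAction.mem_orbit_self x⟩
    obtain ⟨y, hy⟩ := hBo t
    have hcount := card_mul_sum_card_inter_eq Inc hGInc hVo hVpart hVw
      (fun g _ => smul_mem_of_coe_eq_orbit hy g) (fun j x' hx' => (hO t j x' hx').symm) x
    simp_rw [← hO s _ x hxs, hBL, hw, hb, hou] at hcount
    have hparity := natCast_eq_of_two_pow_mul_eq hw' (hb' t) hcount
    rw [natCast_sum_card_inter_eq_ite Inc (hk x ▸ hkodd) (hint x)] at hparity
    have hmem : x ∈ Bo t ↔ t = s :=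
      ⟨fun h => (hBpart x).unique h hxs, by rintro rfl; exact hxs⟩
    have hO_dot : (fun j => (O s j : ZMod 2)) ⬝ᵥ (fun j => (O t j : ZMod 2)) =
        ((∑ j, O s j * O t j : ℕ) : ZMod 2) := by
      push_cast
      rfl
    rw [hA', sumElim_dotProduct_sumElim, dotProduct_single, Pi.single_apply, mul_one, hO_dot,
      ← hparity, if_congr hmem rfl rfl]
    exact CharTwo.add_self_eq_zero _
  have hself : ∀ x ∈ Submodule.span (ZMod 2) (Set.range A),
      ∀ y ∈ Submodule.span (ZMod 2) (Set.range A), x ⬝ᵥ y = 0 :=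
    fun x hx y hy => dotProduct_eq_zero_of_mem_span_s12 horth hx hy
  have hrank : Module.finrank (ZMod 2) (Submodule.span (ZMod 2) (Set.range A)) = m := by
    rw [finrank_span_eq_card (hA' ▸ linearIndependent_sumElim_single _), Fintype.card_fin]
  refine ⟨hself, hrank,
    fun hmn => mem_iff_forall_dotProduct_eq_zero_of_finrank_add_self hself ?_⟩
  rw [hrank, Fintype.card_sum, Fintype.card_fin, Fintype.card_fin, hmn]

/-- For a weakly self-orthogonal 1-design with k odd and all block
intersection numbers even, and a group acting with n point orbits of length
w = 2^u·w' and m block orbits of lengths b_i = 2^o·b_i' (w', b_i' odd, o = u), the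
rows of [I_m | O] over F_2 span a binary self-orthogonal code of length m + v/w and
dimension m; if m = n the code is self-dual. -/
theorem stmt12 {P B G : Type*} [Fintype P] [Fintype B] [Group G]
    [MulAction G P] [MulAction G B]
    (Inc : B → P → Prop) [∀ x, DecidablePred (Inc x)]
    (hGInc : ∀ (g : G) (x : B) (pt : P), Inc x pt ↔ Inc (g • x) (g • pt))
    (k r : ℕ)
    (hk : ∀ x : B, (Finset.univ.filter (fun pt => Inc x pt)).card = k)
    (hr : ∀ pt : P, (Finset.univ.filter (fun x => Inc x pt)).card = r)
    (hkodd : Odd k)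
    (hint : ∀ x x' : B, x ≠ x' →
      Even (Finset.univ.filter (fun pt => Inc x pt ∧ Inc x' pt)).card)
    (n m w : ℕ) (Vo : Fin n → Finset P) (Bo : Fin m → Finset B) (bL : Fin m → ℕ)
    (hVo : ∀ j, ∃ pt, (Vo j : Set P) = MulAction.orbit G pt)
    (hVpart : ∀ pt : P, ∃! j, pt ∈ Vo j)
    (hVw : ∀ j, (Vo j).card = w)
    (hBo : ∀ i, ∃ x, (Bo i : Set B) = MulAction.orbit G x)
    (hBpart : ∀ x : B, ∃! i, x ∈ Bo i)
    (hBL : ∀ i, (Bo i).card = bL i)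
    (u o w' : ℕ) (b' : Fin m → ℕ)
    (hw : w = 2 ^ u * w') (hw' : Odd w')
    (hb : ∀ i, bL i = 2 ^ o * b' i) (hb' : ∀ i, Odd (b' i))
    (hou : o = u)
    (hnw : n * w = Fintype.card P)
    (O : Matrix (Fin m) (Fin n) ℕ)
    (hO : ∀ i j, ∀ x ∈ Bo i, O i j = ((Vo j).filter (fun pt => Inc x pt)).card)
    (A : Fin m → (Fin m ⊕ Fin n) → ZMod 2)
    (hA : A = fun i => Sum.elim (fun i' => if i = i' then 1 else 0)
      (fun j => ((O i j : ℕ) : ZMod 2))) :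
    (∀ x ∈ Submodule.span (ZMod 2) (Set.range A),
      ∀ y ∈ Submodule.span (ZMod 2) (Set.range A), x ⬝ᵥ y = 0) ∧
    Module.finrank (ZMod 2) (Submodule.span (ZMod 2) (Set.range A)) = m ∧
    (m = n → ∀ z : (Fin m ⊕ Fin n) → ZMod 2,
      z ∈ Submodule.span (ZMod 2) (Set.range A) ↔
        ∀ y ∈ Submodule.span (ZMod 2) (Set.range A), z ⬝ᵥ y = 0) :=
  stmt12_general Inc hGInc k hk hkodd hint n m w Vo Bo bL hVo hVpart hVw hBo hBpart hBL u o w' b' hw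
    hw' hb hb' hou O hO A hA
end
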